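/- Let G be an abelian sub-semigroup of K_{η,r}(ℂ). If J_G(u) = ℂⁿ for some u ∈ U = ∏_{k=1}^r (ℂ* × ℂ^{n_k−1}), then for every k = 1,…,r, the rank of F_{G_k} equals n_k − 1. -/

import Mathlib

open Filter Topology Matrix

/-- `n × n` lower triangular complex matrices whose diagonal entries are all equal. -/
def IsTn {n : ℕ} (A : Matrix (Fin n) (Fin n) ℂ) : Prop :=
  (∀ i j : Fin n, i < j → A i j = 0) ∧ ∀ i j : Fin n, A i i = A j j

/-- `F_G`: the span of the vectors `(B - μ_B I) e_i`, `B ∈ G`, `1 ≤ i ≤ n-1`. -/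
noncomputable def FG {n : ℕ} (G : Set (Matrix (Fin n) (Fin n) ℂ)) : Submodule ℂ (Fin n → ℂ) :=
  Submodule.span ℂ {v | ∃ B ∈ G, ∃ i : Fin n, (i : ℕ) < n - 1 ∧
    v = (B - B i i • (1 : Matrix (Fin n) (Fin n) ℂ)).mulVec (Pi.single i 1)}

/-- The sub-semigroup generated by matrices `A 1, …, A p`. -/
def genSG {n p : ℕ} (A : Fin p → Matrix (Fin n) (Fin n) ℂ) :
    Set (Matrix (Fin n) (Fin n) ℂ) :=
  {B | ∃ k : Fin p → ℕ, 0 < ∑ j, k j ∧ B = (List.ofFn fun j => A j ^ k j).prod}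

/-- The extended limit set `J_G(x)` for the semigroup generated by `A 1, …, A p`. -/
def JSet {n p : ℕ} (A : Fin p → Matrix (Fin n) (Fin n) ℂ) (x : Fin n → ℂ) :
    Set (Fin n → ℂ) :=
  {y | ∃ (xs : ℕ → Fin n → ℂ) (k : ℕ → Fin p → ℕ),
    Tendsto (fun m => ∑ j, k m j) atTop atTop ∧
    Tendsto xs atTop (𝓝 x) ∧
    Tendsto (fun m => ((List.ofFn fun j => A j ^ k m j).prod).mulVec (xs m)) atTop (𝓝 y)}

/-- The sub-semigroup of block matrices generated by blockwise generators. -/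
def genSGB {r p : ℕ} {nn : Fin r → ℕ}
    (A : Fin p → ((k : Fin r) → Matrix (Fin (nn k)) (Fin (nn k)) ℂ)) :
    Set ((k : Fin r) → Matrix (Fin (nn k)) (Fin (nn k)) ℂ) :=
  {B | ∃ km : Fin p → ℕ, 0 < ∑ j, km j ∧
    B = fun k => (List.ofFn fun j => A j k ^ km j).prod}

/-- The extended limit set for a semigroup of block-diagonal matrices, acting blockwise
on `ℂⁿ = ∏ k, ℂ^{n_k}`. -/
def JSetB {r p : ℕ} {nn : Fin r → ℕ}
    (A : Fin p → ((k : Fin r) → Matrix (Fin (nn k)) (Fin (nn k)) ℂ))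
    (x : (k : Fin r) → Fin (nn k) → ℂ) : Set ((k : Fin r) → Fin (nn k) → ℂ) :=
  {y | ∃ (xs : ℕ → (k : Fin r) → Fin (nn k) → ℂ) (km : ℕ → Fin p → ℕ),
    Tendsto (fun m => ∑ j, km m j) atTop atTop ∧
    Tendsto xs atTop (𝓝 x) ∧
    Tendsto (fun m k => ((List.ofFn fun j => A j k ^ km m j).prod).mulVec (xs m k))
      atTop (𝓝 y)}

lemma IsTn.one {n : ℕ} : IsTn (1 : Matrix (Fin n) (Fin n) ℂ) := by
  constructor
  · intro i j hij
    simp [Matrix.one_apply, Fin.ne_of_lt hij]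
  · intro i j; simp [Matrix.one_apply]

lemma IsTn.mul {n : ℕ} {A B : Matrix (Fin n) (Fin n) ℂ} (hA : IsTn A) (hB : IsTn B) :
    IsTn (A * B) := by
  have key : ∀ i : Fin n, (A * B) i i = A i i * B i i := by
    intro i
    rw [Matrix.mul_apply]
    rw [Finset.sum_eq_single i]
    · intro l _ hl
      rcases lt_or_gt_of_ne hl with h | h
      · rw [hB.1 l i h, mul_zero]
      · rw [hA.1 i l h, zero_mul]
    · intro h; exact absurd (Finset.mem_univ i) h
  constructor
  · intro i j hij
    rw [Matrix.mul_apply]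
    apply Finset.sum_eq_zero
    intro l _
    by_cases h : i < l
    · rw [hA.1 i l h, zero_mul]
    · have : l < j := lt_of_le_of_lt (not_lt.mp h) hij
      rw [hB.1 l j this, mul_zero]
  · intro i j
    rw [key i, key j, hA.2 i j, hB.2 i j]

lemma IsTn.pow {n : ℕ} {A : Matrix (Fin n) (Fin n) ℂ} (hA : IsTn A) (m : ℕ) : IsTn (A ^ m) := by
  induction m with
  | zero => simpa using IsTn.one
  | succ m ih => rw [pow_succ]; exact ih.mul hA

lemma IsTn.listProd {n : ℕ} (l : List (Matrix (Fin n) (Fin n) ℂ)) (h : ∀ M ∈ l, IsTn M) :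
    IsTn l.prod := by
  induction l with
  | nil => simpa using IsTn.one
  | cons a t ih =>
    rw [List.prod_cons]
    exact (h a List.mem_cons_self).mul (ih fun M hM => h M (List.mem_cons_of_mem a hM))

lemma prod_isTn {n p : ℕ} {A : Fin p → Matrix (Fin n) (Fin n) ℂ} (hT : ∀ j, IsTn (A j))
    (km : Fin p → ℕ) : IsTn (List.ofFn fun j => A j ^ km j).prod := by
  apply IsTn.listProd
  intro M hM
  rw [List.mem_ofFn] at hM
  obtain ⟨j, rfl⟩ := hM
  exact (hT j).pow _

/-- The last column of `B - μ B • 1` is zero, and other columns are in FG. -/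
lemma sub_smul_mulVec_mem_FG {n p : ℕ} {A : Fin p → Matrix (Fin n) (Fin n) ℂ}
    (hT : ∀ j, IsTn (A j)) (km : Fin p → ℕ) (i0 : Fin n) (v : Fin n → ℂ) :
    ((List.ofFn fun j => A j ^ km j).prod
      - (List.ofFn fun j => A j ^ km j).prod i0 i0 • (1 : Matrix (Fin n) (Fin n) ℂ)).mulVec v
      ∈ FG (genSG A) := by
  set B := (List.ofFn fun j => A j ^ km j).prod with hBdef
  have hB : IsTn B := prod_isTn hT km
  set M := B - B i0 i0 • (1 : Matrix (Fin n) (Fin n) ℂ) with hM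
  -- decompose v
  have hv : v = ∑ i, v i • (Pi.single i (1:ℂ) : Fin n → ℂ) := by
    ext j
    rw [Finset.sum_apply]
    simp [Pi.single_apply]
  have : M.mulVec v = ∑ i, v i • M.mulVec (Pi.single i 1) := by
    conv_lhs => rw [hv]
    rw [← Matrix.mulVecLin_apply, map_sum]
    simp [Matrix.mulVecLin_apply, Matrix.mulVec_smul]
  rw [this]
  apply Submodule.sum_mem
  intro i _
  apply Submodule.smul_mem
  by_cases hi : (i : ℕ) < n - 1
  · rcases Nat.eq_zero_or_pos (∑ j, km j) with hz | hpos'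
    · -- all km zero, B = 1, M = 0
      have hB1 : B = 1 := by
        rw [hBdef]
        apply List.prod_eq_one
        intro x hx
        rw [List.mem_ofFn] at hx
        obtain ⟨j, rfl⟩ := hx
        have hkj : km j = 0 := by
          by_contra h
          have := Finset.single_le_sum (f := km) (fun a _ => Nat.zero_le _) (Finset.mem_univ j)
          omega
        show A j ^ km j = 1
        rw [hkj, pow_zero]
      have : M = 0 := by rw [hM, hB1]; simp [Matrix.one_apply]
      rw [this, Matrix.zero_mulVec]
      exact Submodule.zero_mem _
    · apply Submodule.subset_span
      refine ⟨B, ⟨km, hpos', hBdef⟩, i, hi, ?_⟩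
      rw [hM, hB.2 i0 i]
  · -- i is the last index; column is zero
    have h0 : M.mulVec (Pi.single i 1) = 0 := by
      have hin : (i : ℕ) = n - 1 := by omega
      ext j
      rw [Matrix.mulVec_single_one]
      simp only [Matrix.col_apply]
      rw [hM]
      simp only [Matrix.sub_apply, Matrix.smul_apply, smul_eq_mul]
      by_cases hji : j = i
      · subst hji
        rw [hB.2 i0 j, Matrix.one_apply_eq, mul_one, sub_self, Pi.zero_apply]
      · have hlt : j < i := by
          have : (j : ℕ) < n := j.isLt
          have : (j : ℕ) ≠ (i : ℕ) := fun h => hji (Fin.ext h)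
          exact Fin.lt_def.mpr (by omega)
        rw [hB.1 j i hlt, Matrix.one_apply_ne hji, mul_zero, sub_zero, Pi.zero_apply]
    rw [h0]
    exact Submodule.zero_mem _

lemma FG_le_ker {n p : ℕ} (hn : 0 < n) (A : Fin p → Matrix (Fin n) (Fin n) ℂ)
    (hT : ∀ j, IsTn (A j)) :
    FG (genSG A) ≤ LinearMap.ker (LinearMap.proj (R := ℂ) (φ := fun _ : Fin n => ℂ) ⟨0, hn⟩) := by
  rw [FG, Submodule.span_le]
  rintro v ⟨B, ⟨km, hk, rfl⟩, i, hi, rfl⟩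
  have hB : IsTn (List.ofFn fun j => A j ^ km j).prod := prod_isTn hT km
  set B := (List.ofFn fun j => A j ^ km j).prod
  simp only [SetLike.mem_coe, LinearMap.mem_ker, LinearMap.proj_apply]
  rw [Matrix.mulVec_single_one]
  simp only [Matrix.col_apply, Matrix.sub_apply, Matrix.smul_apply, smul_eq_mul]
  by_cases h0 : i = ⟨0, hn⟩
  · subst h0
    rw [Matrix.one_apply_eq, mul_one, sub_self]
  · have hlt : (⟨0, hn⟩ : Fin n) < i := by
      have : (i : ℕ) ≠ 0 := by simpa [Fin.ext_iff] using h0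
      rw [Fin.lt_def]
      show (0:ℕ) < (i:ℕ)
      omega
    rw [hB.1 _ _ hlt, Matrix.one_apply_ne (Ne.symm h0), mul_zero, sub_zero]

lemma finrank_ker_proj {n : ℕ} (hn : 0 < n) :
    Module.finrank ℂ
      (LinearMap.ker (LinearMap.proj (R := ℂ) (φ := fun _ : Fin n => ℂ) ⟨0, hn⟩)) = n - 1 := by
  set f := LinearMap.proj (R := ℂ) (φ := fun _ : Fin n => ℂ) (⟨0, hn⟩ : Fin n) with hf
  have hsurj : Function.Surjective f := fun c => ⟨fun _ => c, rfl⟩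
  have h1 := LinearMap.finrank_range_add_finrank_ker f
  rw [LinearMap.range_eq_top.2 hsurj, finrank_top, Module.finrank_self,
    Module.finrank_fin_fun] at h1
  omega

/-- If `J_G(u) = ℂⁿ` for some `u ∈ U`, then `rank F_{G_k} = n_k - 1` for every `k`. -/
theorem stmt5 (r p : ℕ) (nn : Fin r → ℕ) (hpos : ∀ k, 0 < nn k)
    (A : Fin p → ((k : Fin r) → Matrix (Fin (nn k)) (Fin (nn k)) ℂ))
    (hT : ∀ j k, IsTn (A j k))
    (hcomm : ∀ i j k, A i k * A j k = A j k * A i k)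
    (u : (k : Fin r) → Fin (nn k) → ℂ) (hu : ∀ k, u k ⟨0, hpos k⟩ ≠ 0)
    (hJ : JSetB A u = Set.univ) :
    ∀ k : Fin r, Module.finrank ℂ (FG (genSG (fun j => A j k))) = nn k - 1 := by
  intro k
  have hn : 0 < nn k := hpos k
  set Ak : Fin p → Matrix (Fin (nn k)) (Fin (nn k)) ℂ := fun j => A j k with hAk
  have hTk : ∀ j, IsTn (Ak j) := fun j => hT j k
  set z0 : Fin (nn k) := ⟨0, hn⟩ with hz0
  have hub : Module.finrank ℂ (FG (genSG Ak)) ≤ nn k - 1 := by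
    have h := Submodule.finrank_mono (FG_le_ker hn Ak hTk)
    rwa [finrank_ker_proj hn] at h
  refine le_antisymm hub ?_
  by_contra hne
  push_neg at hne
  have hlt : Module.finrank ℂ (FG (genSG Ak)) < nn k - 1 := hne
  -- the subspace W
  set W : Submodule ℂ (Fin (nn k) → ℂ) := FG (genSG Ak) ⊔ (ℂ ∙ u k) with hWdef
  have hWlt : W < ⊤ := by
    rw [lt_top_iff_ne_top]
    intro htop
    have h1 : Module.finrank ℂ W ≤
        Module.finrank ℂ (FG (genSG Ak)) + Module.finrank ℂ (ℂ ∙ u k) :=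
      Submodule.finrank_add_le_finrank_add_finrank _ _
    have hu0 : u k ≠ 0 := fun h => hu k (by rw [h]; rfl)
    have h2 : Module.finrank ℂ (ℂ ∙ u k) = 1 := finrank_span_singleton hu0
    have h3 : Module.finrank ℂ W = nn k := by
      rw [htop, finrank_top, Module.finrank_fin_fun]
    omega
  obtain ⟨w, -, hw⟩ := SetLike.exists_of_lt hWlt
  -- a linear functional vanishing on W with φ w = 1
  have hq : W.mkQ w ≠ 0 := by
    rw [Submodule.mkQ_apply, Ne, Submodule.Quotient.mk_eq_zero]
    exact hw
  obtain ⟨g, hg⟩ : ∃ g : Module.Dual ℂ ((Fin (nn k) → ℂ) ⧸ W), g (W.mkQ w) ≠ 0 := by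
    by_contra h
    push_neg at h
    exact hq ((Module.forall_dual_apply_eq_zero_iff ℂ _).1 h)
  set φ : (Fin (nn k) → ℂ) →ₗ[ℂ] ℂ := (g (W.mkQ w))⁻¹ • (g ∘ₗ W.mkQ) with hφ
  have hφw : φ w = 1 := by
    simp only [hφ, LinearMap.smul_apply, LinearMap.comp_apply, smul_eq_mul]
    exact inv_mul_cancel₀ hg
  have hφW : ∀ x ∈ W, φ x = 0 := by
    intro x hx
    have : W.mkQ x = 0 := by
      rw [Submodule.mkQ_apply, Submodule.Quotient.mk_eq_zero]; exact hx
    simp only [hφ, LinearMap.smul_apply, LinearMap.comp_apply, this, map_zero, smul_zero]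
  have hφcont : Continuous φ := LinearMap.continuous_of_finiteDimensional φ
  -- extract sequences from J
  have hy : Function.update u k w ∈ JSetB A u := by rw [hJ]; trivial
  obtain ⟨xs, km, hsum, hx, hlim⟩ := hy
  set Bm : ℕ → Matrix (Fin (nn k)) (Fin (nn k)) ℂ :=
    fun m => (List.ofFn fun j => Ak j ^ km m j).prod with hBm
  set μ : ℕ → ℂ := fun m => Bm m z0 z0 with hμ
  have hBT : ∀ m, IsTn (Bm m) := fun m => prod_isTn hTk (km m)
  have hxk : Tendsto (fun m => xs m k) atTop (𝓝 (u k)) :=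
    ((continuous_apply k).tendsto u).comp hx
  have hx0 : Tendsto (fun m => xs m k z0) atTop (𝓝 (u k z0)) :=
    ((continuous_apply z0).tendsto (u k)).comp hxk
  have hlimk : Tendsto (fun m => (Bm m).mulVec (xs m k)) atTop (𝓝 w) := by
    have h := ((continuous_apply k).tendsto (Function.update u k w)).comp hlim
    simpa [Function.update_self, Function.comp_def] using h
  have hlim0 : Tendsto (fun m => ((Bm m).mulVec (xs m k)) z0) atTop (𝓝 (w z0)) :=
    ((continuous_apply z0).tendsto w).comp hlimk
  -- first coordinate relation
  have hψ : ∀ m, ((Bm m).mulVec (xs m k)) z0 = μ m * xs m k z0 := by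
    intro m
    have hsum1 : ∑ l, Bm m z0 l * xs m k l = Bm m z0 z0 * xs m k z0 := by
      refine Finset.sum_eq_single z0 (fun l _ hl => ?_) (fun h => absurd (Finset.mem_univ z0) h)
      have hlt' : z0 < l := by
        rw [Fin.lt_def]
        show (0:ℕ) < (l:ℕ)
        have : (l : ℕ) ≠ 0 := by simpa [hz0, Fin.ext_iff] using hl
        omega
      rw [(hBT m).1 z0 l hlt', zero_mul]
    rw [Matrix.mulVec, dotProduct, hsum1]
  -- μ converges
  have hμlim : Tendsto μ atTop (𝓝 (w z0 / u k z0)) := by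
    have hd : Tendsto (fun m => ((Bm m).mulVec (xs m k)) z0 / xs m k z0) atTop
        (𝓝 (w z0 / u k z0)) := hlim0.div hx0 (hu k)
    apply hd.congr'
    filter_upwards [hx0.eventually_ne (hu k)] with m hm
    rw [hψ m, mul_div_assoc, div_self hm, mul_one]
  -- φ relation
  have hφB : ∀ m, φ ((Bm m).mulVec (xs m k)) = μ m * φ (xs m k) := by
    intro m
    have hdecomp : (Bm m).mulVec (xs m k)
        = ((Bm m) - μ m • 1).mulVec (xs m k) + μ m • (xs m k) := by
      rw [Matrix.sub_mulVec, Matrix.smul_mulVec, Matrix.one_mulVec, sub_add_cancel]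
    rw [hdecomp, map_add, _root_.map_smul, smul_eq_mul]
    have hmem : ((Bm m) - μ m • 1).mulVec (xs m k) ∈ FG (genSG Ak) :=
      sub_smul_mulVec_mem_FG hTk (km m) z0 (xs m k)
    rw [hφW _ (Submodule.mem_sup_left hmem), zero_add]
  -- final contradiction
  have l1 : Tendsto (fun m => φ ((Bm m).mulVec (xs m k))) atTop (𝓝 (φ w)) :=
    (hφcont.tendsto w).comp hlimk
  have hφu : φ (u k) = 0 :=
    hφW _ (Submodule.mem_sup_right (Submodule.mem_span_singleton_self _))
  have l2 : Tendsto (fun m => μ m * φ (xs m k)) atTop (𝓝 0) := by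
    have h := hμlim.mul ((hφcont.tendsto (u k)).comp hxk)
    rw [hφu, mul_zero] at h
    exact h
  have hcontra : φ w = 0 :=
    tendsto_nhds_unique (l1.congr fun m => hφB m) l2
  rw [hφw] at hcontra
  exact one_ne_zero hcontra
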